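/- Let M=(M_p)_{p∈ℕ_0} and N=(N_p)_{p∈ℕ_0} be sequences in LC which both satisfy derivation closedness (M2') and the single-sequence condition (12L2B). Then M⪯N if and only if S_{(M)}(ℝ^d) ⊆ S_{(N)}(ℝ^d) with continuous inclusion for all dimensions d∈ℕ, where continuity means: for every h>0 there exist h'>0 and C≥1 with ‖f‖_{∞,N,h} ≤ C·‖f‖_{∞,M,h'} for every f∈S_{(M)}(ℝ^d). The implication from M⪯N to the continuous inclusions holds for arbitrary sequences of positive reals, and for the converse only the continuous inclusion in dimension d=1 is required. -/

import Mathlib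

open Filter Asymptotics

noncomputable section

/-- Partial derivative operator in coordinate `i`. -/
def pderivOp {d : ℕ} (i : Fin d) (f : (Fin d → ℝ) → ℝ) : (Fin d → ℝ) → ℝ :=
  fun x => fderiv ℝ f x (Pi.single i 1)

/-- Iterated partial derivative `∂^β f` for a multi-index `β`. -/
def mderiv {d : ℕ} (β : Fin d → ℕ) (f : (Fin d → ℝ) → ℝ) : (Fin d → ℝ) → ℝ :=
  (List.finRange d).foldr (fun i g => (pderivOp i)^[β i] g) f

/-- The monomial `x^α` for a multi-index `α`. -/
def mpow {d : ℕ} (x : Fin d → ℝ) (α : Fin d → ℕ) : ℝ := ∏ i, x i ^ α i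

/-- The length `|α| = α 0 + ⋯ + α (d-1)` of a multi-index. -/
def msize {d : ℕ} (α : Fin d → ℕ) : ℕ := ∑ i, α i

/-- Young conjugate `φ*_ω(s) = sup_{t ≥ 0} (s·t − ω(e^t))`. -/
def youngConj (ω : ℝ → ℝ) (s : ℝ) : ℝ :=
  sSup {y : ℝ | ∃ t : ℝ, 0 ≤ t ∧ y = s * t - ω (Real.exp t)}

/-- A general weight function: continuous, increasing, `ω:[0,∞)→[0,∞)`, with
conditions (α), (γ), (δ) (condition (β) is not required). -/
structure IsGenWeightFun (ω : ℝ → ℝ) : Prop where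
  nonneg : ∀ t, 0 ≤ t → 0 ≤ ω t
  continuous : ContinuousOn ω (Set.Ici 0)
  mono : MonotoneOn ω (Set.Ici 0)
  alpha : ∃ L : ℝ, 1 ≤ L ∧ ∀ t, 0 ≤ t → ω (2 * t) ≤ L * (ω t + 1)
  gamma : Real.log =o[Filter.atTop] ω
  delta : ConvexOn ℝ (Set.Ici 0) fun t => ω (Real.exp t)

/-- A weight function: a general weight function which moreover satisfies
(β): `ω(t) = O(t²)` as `t → ∞`. -/
structure IsWeightFun (ω : ℝ → ℝ) extends IsGenWeightFun ω : Prop where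
  beta : ω =O[Filter.atTop] fun t : ℝ => t ^ 2

/-- The weight `exp((1/l)·φ*_ω(l·k))`. -/
def wWeight (ω : ℝ → ℝ) (l : ℝ) (k : ℕ) : ℝ :=
  Real.exp (1 / l * youngConj ω (l * (k : ℝ)))

/-- Roumieu Gelfand–Shilov class `S_{{ω}}(ℝ^d)`. -/
def SRoumieuW (ω : ℝ → ℝ) (d : ℕ) : Set ((Fin d → ℝ) → ℝ) :=
  {f | ContDiff ℝ (⊤ : ℕ∞) f ∧ ∃ l > 0, ∃ C > 0, ∀ α β : Fin d → ℕ, ∀ x : Fin d → ℝ,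
    |mpow x α * mderiv β f x| ≤ C * wWeight ω l (msize α + msize β)}

/-- Beurling Gelfand–Shilov class `S_{(ω)}(ℝ^d)`. -/
def SBeurlingW (ω : ℝ → ℝ) (d : ℕ) : Set ((Fin d → ℝ) → ℝ) :=
  {f | ContDiff ℝ (⊤ : ℕ∞) f ∧ ∀ l > 0, ∃ C > 0, ∀ α β : Fin d → ℕ, ∀ x : Fin d → ℝ,
    |mpow x α * mderiv β f x| ≤ C * wWeight ω l (msize α + msize β)}

/-- Continuity of the inclusion `S_(ω)(ℝ^d) ⊆ S_(σ)(ℝ^d)`: for every `μ > 0` there are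
`ν > 0` and `C ≥ 1` with `q_{σ,μ}(f) ≤ C · q_{ω,ν}(f)` for all `f ∈ S_(ω)(ℝ^d)`,
expressed via bounding constants. -/
def contIncBW (ω σ : ℝ → ℝ) (d : ℕ) : Prop :=
  ∀ μ > 0, ∃ ν > 0, ∃ C : ℝ, 1 ≤ C ∧ ∀ f ∈ SBeurlingW ω d, ∀ D : ℝ, 0 ≤ D →
    (∀ α β : Fin d → ℕ, ∀ x : Fin d → ℝ,
      |mpow x α * mderiv β f x| ≤ D * wWeight ω ν (msize α + msize β)) →
    (∀ α β : Fin d → ℕ, ∀ x : Fin d → ℝ,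
      |mpow x α * mderiv β f x| ≤ C * D * wWeight σ μ (msize α + msize β))

/-- `M ∈ LC`: normalized, log-convex, with `M_p^{1/p} → ∞`. -/
structure IsLC (M : ℕ → ℝ) : Prop where
  pos : ∀ p, 0 < M p
  norm0 : M 0 = 1
  norm1 : 1 ≤ M 1
  logConvex : ∀ p : ℕ, M (p + 1) ^ 2 ≤ M p * M (p + 2)
  root_tendsto : Filter.Tendsto (fun p : ℕ => M p ^ (1 / (p : ℝ))) Filter.atTop Filter.atTop

/-- `M ⪯ N`: `∃ C ≥ 1, ∀ p, M_p ≤ C^p N_p`. -/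
def seqPreceq (M N : ℕ → ℝ) : Prop := ∃ C : ℝ, 1 ≤ C ∧ ∀ p : ℕ, M p ≤ C ^ p * N p

/-- `M ◁ N`: `(M_p/N_p)^{1/p} → 0`. -/
def seqLtriangle (M N : ℕ → ℝ) : Prop :=
  Filter.Tendsto (fun p : ℕ => (M p / N p) ^ (1 / (p : ℝ))) Filter.atTop (nhds 0)

/-- `‖f‖_{∞,M,h} ≤ C`, expressed pointwise. -/
def seqBound {d : ℕ} (M : ℕ → ℝ) (h C : ℝ) (f : (Fin d → ℝ) → ℝ) : Prop :=
  ∀ α β : Fin d → ℕ, ∀ x : Fin d → ℝ,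
    |mpow x α * mderiv β f x| ≤ C * h ^ (msize α + msize β) * M (msize α + msize β)

/-- Roumieu class `S_{{M}}(ℝ^d)` for a single weight sequence. -/
def SRoumieuSeq (M : ℕ → ℝ) (d : ℕ) : Set ((Fin d → ℝ) → ℝ) :=
  {f | ContDiff ℝ (⊤ : ℕ∞) f ∧ ∃ C > 0, ∃ h > 0, seqBound M h C f}

/-- Beurling class `S_(M)(ℝ^d)` for a single weight sequence. -/
def SBeurlingSeq (M : ℕ → ℝ) (d : ℕ) : Set ((Fin d → ℝ) → ℝ) :=
  {f | ContDiff ℝ (⊤ : ℕ∞) f ∧ ∀ h > 0, ∃ C > 0, seqBound M h C f}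

/-- Moderate growth (M2). -/
def condM2 (M : ℕ → ℝ) : Prop := ∃ C : ℝ, 1 ≤ C ∧ ∀ p q : ℕ, M (p + q) ≤ C ^ (p + q) * M p * M q

/-- Derivation closedness (M2'). -/
def condM2' (M : ℕ → ℝ) : Prop := ∃ D : ℝ, 1 ≤ D ∧ ∀ p : ℕ, M (p + 1) ≤ D ^ (p + 1) * M p

/-- Condition (12L2R) for a single sequence. -/
def cond12L2Rseq (M : ℕ → ℝ) : Prop :=
  ∃ B > 0, ∃ C > 0, ∃ H > 0, ∀ p q : ℕ,
    (p : ℝ) ^ ((p : ℝ) / 2) * M q ≤ B * C ^ p * H ^ (p + q) * M (p + q)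

/-- Condition (12L2B) for a single sequence. -/
def cond12L2Bseq (M : ℕ → ℝ) : Prop :=
  ∃ H > 0, ∀ C > 0, ∃ B > 0, ∀ p q : ℕ,
    (p : ℝ) ^ ((p : ℝ) / 2) * M q ≤ B * C ^ p * H ^ (p + q) * M (p + q)

/-- Non-quasianalyticity of a weight sequence: `∑ M_{p-1}/M_p < ∞`. -/
def nonQA (M : ℕ → ℝ) : Prop := Summable fun p : ℕ => M p / M (p + 1)

/-- Continuity of the inclusion `S_(M)(ℝ^d) ⊆ S_(N)(ℝ^d)` for single sequences. -/
def contIncBSeq (M N : ℕ → ℝ) (d : ℕ) : Prop :=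
  ∀ h > 0, ∃ h' > 0, ∃ C : ℝ, 1 ≤ C ∧ ∀ f ∈ SBeurlingSeq M d, ∀ D : ℝ, 0 ≤ D →
    seqBound M h' D f → seqBound N h (C * D) f

/-- A weight matrix: positive normalized sequences, pointwise nondecreasing in the index. -/
def IsWeightMatrix (M : ℝ → ℕ → ℝ) : Prop :=
  (∀ l, 0 < l → (∀ p, 0 < M l p) ∧ M l 0 = 1) ∧
    ∀ l k, 0 < l → l ≤ k → ∀ p, M l p ≤ M k p

/-- Standard log-convexity of a weight matrix. -/
def StdLogConvex (M : ℝ → ℕ → ℝ) : Prop := ∀ l, 0 < l → IsLC (M l)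

/-- Roumieu class `S_{{𝓜}}(ℝ^d)` for a weight matrix. -/
def SRoumieuMat (M : ℝ → ℕ → ℝ) (d : ℕ) : Set ((Fin d → ℝ) → ℝ) :=
  {f | ∃ l > 0, f ∈ SRoumieuSeq (M l) d}

/-- Beurling class `S_(𝓜)(ℝ^d)` for a weight matrix. -/
def SBeurlingMat (M : ℝ → ℕ → ℝ) (d : ℕ) : Set ((Fin d → ℝ) → ℝ) :=
  {f | ∀ l > 0, f ∈ SBeurlingSeq (M l) d}

/-- `𝓜{⪯}𝓝`. -/
def matPreceqR (M N : ℝ → ℕ → ℝ) : Prop := ∀ l > 0, ∃ k > 0, seqPreceq (M l) (N k)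

/-- `𝓜(⪯)𝓝`. -/
def matPreceqB (M N : ℝ → ℕ → ℝ) : Prop := ∀ l > 0, ∃ k > 0, seqPreceq (M k) (N l)

/-- `𝓜 ◁ 𝓝`. -/
def matLtriangle (M N : ℝ → ℕ → ℝ) : Prop := ∀ l > 0, ∀ k > 0, seqLtriangle (M l) (N k)

/-- Condition (12L2R) for a weight matrix (Roumieu). -/
def cond12L2RMat (M : ℝ → ℕ → ℝ) : Prop :=
  ∀ l > 0, ∃ k, l ≤ k ∧ ∃ B > 0, ∃ C > 0, ∃ H > 0, ∀ p q : ℕ,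
    (p : ℝ) ^ ((p : ℝ) / 2) * M l q ≤ B * C ^ p * H ^ (p + q) * M k (p + q)

/-- Condition (M2')_R for a weight matrix (Roumieu). -/
def condM2'RMat (M : ℝ → ℕ → ℝ) : Prop :=
  ∀ l > 0, ∃ k, l ≤ k ∧ ∃ A : ℝ, 1 ≤ A ∧ ∀ p : ℕ, M l (p + 1) ≤ A ^ (p + 1) * M k p

/-- Condition (12L2B) for a weight matrix (Beurling). -/
def cond12L2BMat (M : ℝ → ℕ → ℝ) : Prop :=
  ∀ l > 0, ∃ k, 0 < k ∧ k ≤ l ∧ ∃ H > 0, ∀ C > 0, ∃ B > 0, ∀ p q : ℕ,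
    (p : ℝ) ^ ((p : ℝ) / 2) * M k q ≤ B * C ^ p * H ^ (p + q) * M l (p + q)

/-- Condition (M2')_B for a weight matrix (Beurling). -/
def condM2'BMat (M : ℝ → ℕ → ℝ) : Prop :=
  ∀ l > 0, ∃ k, 0 < k ∧ k ≤ l ∧ ∃ A : ℝ, 1 ≤ A ∧ ∀ p : ℕ, M k (p + 1) ≤ A ^ (p + 1) * M l p

/-- Continuity of the inclusion `S_(𝓜)(ℝ^d) ⊆ S_(𝓝)(ℝ^d)` for weight matrices. -/
def contIncBMat (M N : ℝ → ℕ → ℝ) (d : ℕ) : Prop :=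
  ∀ l > 0, ∀ h > 0, ∃ k > 0, ∃ h' > 0, ∃ C : ℝ, 1 ≤ C ∧
    ∀ f ∈ SBeurlingMat M d, ∀ D : ℝ, 0 ≤ D →
      seqBound (M k) h' D f → seqBound (N l) h (C * D) f

/-- Associated function `ω_M(t) = sup_p log(t^p / M_p)`. -/
def assocFun (M : ℕ → ℝ) (t : ℝ) : ℝ :=
  sSup {y : ℝ | ∃ p : ℕ, y = Real.log (t ^ p / M p)}

/-- Condition (α) for a function. -/
def condAlpha (ω : ℝ → ℝ) : Prop := ∃ L : ℝ, 1 ≤ L ∧ ∀ t, 0 ≤ t → ω (2 * t) ≤ L * (ω t + 1)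

/-- Condition (ω6): `∃ H ≥ 1, ∀ t ≥ 0, 2ω(t) ≤ ω(Ht) + H`. -/
def condOmega6 (ω : ℝ → ℝ) : Prop := ∃ H : ℝ, 1 ≤ H ∧ ∀ t, 0 ≤ t → 2 * ω t ≤ ω (H * t) + H

/-- The sequence `W^{(λ)}_p = exp((1/λ)φ*_ω(λ p))`. -/
def wSeq (ω : ℝ → ℝ) (l : ℝ) (p : ℕ) : ℝ := Real.exp (1 / l * youngConj ω (l * (p : ℝ)))

end


noncomputable def gaussF : ℝ → ℝ := fun t => Real.exp (-(t ^ 2 / 2))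

lemma gaussF_contDiff : ContDiff ℝ (⊤ : ℕ∞) gaussF := by
  have : ContDiff ℝ (⊤ : ℕ∞) (fun t : ℝ => -(t ^ 2 / 2)) := by
    have : ContDiff ℝ (⊤ : ℕ∞) (fun t : ℝ => t ^ 2) := contDiff_id.pow 2
    exact (this.div_const 2).neg
  exact Real.contDiff_exp.comp this

lemma gaussF_pos (t : ℝ) : 0 < gaussF t := Real.exp_pos _

lemma gaussF_deriv : deriv gaussF = fun t => -t * gaussF t := by
  funext t
  have h1 : HasDerivAt (fun t : ℝ => -(t ^ 2 / 2)) (-t) t := by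
    have := ((hasDerivAt_pow 2 t).div_const 2).neg
    exact this.congr_deriv (by ring)
  have := (Real.hasDerivAt_exp (-(t ^ 2 / 2))).comp t h1
  show deriv (Real.exp ∘ fun t : ℝ => -(t ^ 2 / 2)) t = -t * Real.exp (-(t ^ 2 / 2))
  rw [this.deriv]; ring

lemma gaussF_iter_diff (n : ℕ) : Differentiable ℝ (iteratedDeriv n gaussF) :=
  gaussF_contDiff.differentiable_iteratedDeriv n (by
    exact_mod_cast ENat.coe_lt_top n )

/-- Hermite recurrence. -/
lemma gaussF_rec : ∀ n : ℕ, ∀ x : ℝ,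
    iteratedDeriv (n + 1) gaussF x = -x * iteratedDeriv n gaussF x
      - n * iteratedDeriv (n - 1) gaussF x := by
  intro n
  induction n with
  | zero =>
      intro x
      simp [iteratedDeriv_one, gaussF_deriv]
  | succ n ih =>
      intro x
      have hfun : iteratedDeriv (n + 1) gaussF =
          fun y => -y * iteratedDeriv n gaussF y - n * iteratedDeriv (n - 1) gaussF y :=
        funext ih
      have d0 : DifferentiableAt ℝ (iteratedDeriv n gaussF) x := (gaussF_iter_diff n) x
      have d1 : DifferentiableAt ℝ (iteratedDeriv (n - 1) gaussF) x := (gaussF_iter_diff _) x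
      have hder : deriv (fun y => -y * iteratedDeriv n gaussF y
          - (n : ℝ) * iteratedDeriv (n - 1) gaussF y) x
          = -x * deriv (iteratedDeriv n gaussF) x - iteratedDeriv n gaussF x
            - (n : ℝ) * deriv (iteratedDeriv (n - 1) gaussF) x := by
        have h1 : DifferentiableAt ℝ (fun y : ℝ => -y * iteratedDeriv n gaussF y) x :=
          (by fun_prop : DifferentiableAt ℝ (fun y : ℝ => -y) x).mul d0
        have h2 : DifferentiableAt ℝ (fun y : ℝ => (n : ℝ) * iteratedDeriv (n - 1) gaussF y) x :=
          d1.const_mul _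
        rw [deriv_fun_sub h1 h2, deriv_fun_mul (by fun_prop : DifferentiableAt ℝ (fun y : ℝ => -y) x) d0, deriv_const_mul _ d1]
        simp [deriv_neg]
        ring
      have e2 : deriv (iteratedDeriv n gaussF) x = iteratedDeriv (n + 1) gaussF x := by
        rw [← iteratedDeriv_succ]
      rw [show n + 1 + 1 = (n + 1) + 1 from rfl, iteratedDeriv_succ]
      conv_lhs => rw [hfun]
      rw [hder, e2]
      rcases Nat.eq_zero_or_pos n with hn | hn
      · subst hn
        push_cast
        ring
      · have h1 : n - 1 + 1 = n := Nat.succ_pred_eq_of_pos hn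
        have e1 : deriv (iteratedDeriv (n - 1) gaussF) x = iteratedDeriv n gaussF x := by
          rw [← iteratedDeriv_succ, h1]
        rw [e1]
        simp only [Nat.add_sub_cancel]
        push_cast
        ring

def Pb (n : ℕ) : Prop := ∀ x : ℝ,
  |iteratedDeriv n gaussF x| ≤ 2 ^ n * (x ^ 2 + (n : ℝ)) ^ ((n : ℝ) / 2) * gaussF x

lemma gaussF_bound1 : ∀ n : ℕ, Pb n := by
  have key : ∀ n : ℕ, Pb n ∧ Pb (n + 1) := by
    intro n
    induction n with
    | zero =>
        constructor
        · intro x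
          simp [Pb, gaussF, abs_of_pos (Real.exp_pos _), Real.rpow_zero]
        · intro x
          have h1 : |iteratedDeriv 1 gaussF x| = |x| * gaussF x := by
            rw [iteratedDeriv_one, gaussF_deriv]
            rw [abs_mul, abs_of_pos (gaussF_pos x), abs_neg]
          push_cast
          rw [h1]
          have hx : |x| ≤ (x ^ 2 + 1) ^ ((1 : ℝ) / 2) := by
            rw [← Real.sqrt_eq_rpow, ← Real.sqrt_sq_eq_abs]
            exact Real.sqrt_le_sqrt (by nlinarith)
          have h2 := mul_le_mul_of_nonneg_right hx (gaussF_pos x).le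
          calc |x| * gaussF x ≤ (x ^ 2 + 1) ^ ((1:ℝ) / 2) * gaussF x := h2
            _ ≤ 2 ^ 1 * (x ^ 2 + 1) ^ ((1 : ℝ) / 2) * gaussF x := by
                nlinarith [Real.rpow_nonneg (by positivity : (0:ℝ) ≤ x ^ 2 + 1) ((1:ℝ)/2),
                  gaussF_pos x]
    | succ n ih =>
        refine ⟨ih.2, ?_⟩
        intro x
        have hrec := gaussF_rec (n + 1) x
        simp only [Nat.add_sub_cancel] at hrec
        rw [hrec]
        have hb1 := ih.2 x
        have hb0 := ih.1 x
        push_cast at hb1 hb0 ⊢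
        set A : ℝ := x ^ 2 + ((n : ℝ) + 1 + 1) with hA
        have hApos : 0 < A := by positivity
        have hx2 : |x| ≤ A ^ ((1:ℝ)/2) := by
          rw [← Real.sqrt_eq_rpow, ← Real.sqrt_sq_eq_abs]
          exact Real.sqrt_le_sqrt (by nlinarith)
        have hmono1 : ((x:ℝ) ^ 2 + ((n:ℝ) + 1)) ^ (((n : ℝ) + 1) / 2)
            ≤ A ^ (((n : ℝ) + 1) / 2) :=
          Real.rpow_le_rpow (by positivity) (by rw [hA]; linarith) (by positivity)
        have hmono0 : ((x:ℝ) ^ 2 + (n:ℝ)) ^ ((n : ℝ) / 2) ≤ A ^ ((n : ℝ) / 2) :=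
          Real.rpow_le_rpow (by positivity) (by rw [hA]; linarith) (by positivity)
        have hsplit1 : A ^ ((1:ℝ)/2) * A ^ (((n : ℝ) + 1) / 2) = A ^ (((n : ℝ) + 1 + 1) / 2) := by
          rw [← Real.rpow_add hApos]; ring_nf
        have hsplit0 : A * A ^ ((n : ℝ) / 2) = A ^ (((n : ℝ) + 1 + 1) / 2) := by
          nth_rewrite 1 [← Real.rpow_one A]
          rw [← Real.rpow_add hApos]; ring_nf
        have hF := (gaussF_pos x).le
        have step1 : |(-x) * iteratedDeriv (n + 1) gaussF x|
            ≤ 2 ^ (n + 1) * A ^ (((n : ℝ) + 1 + 1) / 2) * gaussF x := by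
          rw [abs_mul, abs_neg]
          calc |x| * |iteratedDeriv (n + 1) gaussF x|
              ≤ A ^ ((1:ℝ)/2) * (2 ^ (n + 1) * ((x:ℝ) ^ 2 + ((n:ℝ) + 1)) ^ (((n : ℝ) + 1) / 2)
                * gaussF x) :=
                mul_le_mul hx2 hb1 (abs_nonneg _) (by positivity)
            _ ≤ A ^ ((1:ℝ)/2) * (2 ^ (n + 1) * A ^ (((n : ℝ) + 1) / 2) * gaussF x) := by
                apply mul_le_mul_of_nonneg_left _ (by positivity)
                apply mul_le_mul_of_nonneg_right _ hF
                exact mul_le_mul_of_nonneg_left hmono1 (by positivity)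
            _ = 2 ^ (n + 1) * (A ^ ((1:ℝ)/2) * A ^ (((n : ℝ) + 1) / 2)) * gaussF x := by ring
            _ = 2 ^ (n + 1) * A ^ (((n : ℝ) + 1 + 1) / 2) * gaussF x := by rw [hsplit1]
        have step0 : ((n : ℝ) + 1) * |iteratedDeriv n gaussF x|
            ≤ 2 ^ n * A ^ (((n : ℝ) + 1 + 1) / 2) * gaussF x := by
          calc ((n : ℝ) + 1) * |iteratedDeriv n gaussF x|
              ≤ A * |iteratedDeriv n gaussF x| := by
                apply mul_le_mul_of_nonneg_right _ (abs_nonneg _)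
                rw [hA]; nlinarith
            _ ≤ A * (2 ^ n * ((x:ℝ) ^ 2 + (n:ℝ)) ^ ((n : ℝ) / 2) * gaussF x) :=
                mul_le_mul_of_nonneg_left hb0 hApos.le
            _ ≤ A * (2 ^ n * A ^ ((n : ℝ) / 2) * gaussF x) := by
                apply mul_le_mul_of_nonneg_left _ hApos.le
                apply mul_le_mul_of_nonneg_right _ hF
                exact mul_le_mul_of_nonneg_left hmono0 (by positivity)
            _ = 2 ^ n * (A * A ^ ((n : ℝ) / 2)) * gaussF x := by ring
            _ = 2 ^ n * A ^ (((n : ℝ) + 1 + 1) / 2) * gaussF x := by rw [hsplit0]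
        have habs : |(-x) * iteratedDeriv (n + 1) gaussF x - ((n : ℝ) + 1) * iteratedDeriv n gaussF x|
            ≤ |(-x) * iteratedDeriv (n + 1) gaussF x| + ((n : ℝ) + 1) * |iteratedDeriv n gaussF x| := by
          refine (abs_sub _ _).trans ?_
          have he : |((n : ℝ) + 1) * iteratedDeriv n gaussF x|
              = ((n : ℝ) + 1) * |iteratedDeriv n gaussF x| := by
            rw [abs_mul, abs_of_nonneg (by positivity : (0:ℝ) ≤ (n : ℝ) + 1)]
          rw [he]
        calc |(-x) * iteratedDeriv (n + 1) gaussF x - ((n : ℝ) + 1) * iteratedDeriv n gaussF x|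
            ≤ |(-x) * iteratedDeriv (n + 1) gaussF x|
              + ((n : ℝ) + 1) * |iteratedDeriv n gaussF x| := habs
          _ ≤ 2 ^ (n + 1) * A ^ (((n : ℝ) + 1 + 1) / 2) * gaussF x
              + 2 ^ n * A ^ (((n : ℝ) + 1 + 1) / 2) * gaussF x := add_le_add step1 step0
          _ ≤ 2 ^ (n + 1 + 1) * A ^ (((n : ℝ) + 1 + 1) / 2) * gaussF x := by
              have : (0:ℝ) ≤ A ^ (((n : ℝ) + 1 + 1) / 2) := by positivity
              have h2 : (2:ℝ) ^ (n+1) + 2 ^ n ≤ 2 ^ (n+1+1) := by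
                have e : (2:ℝ) ^ (n+1) = 2 ^ n * 2 := pow_succ 2 n
                have e2 : (2:ℝ) ^ (n+1+1) = 2 ^ (n+1) * 2 := pow_succ 2 (n+1)
                nlinarith [pow_pos (by norm_num : (0:ℝ) < 2) n]
              nlinarith [mul_nonneg this hF]
  exact fun n => (key n).1

lemma gaussF_bound (n : ℕ) (x : ℝ) :
    |iteratedDeriv n gaussF x| ≤ 4 ^ n * (n : ℝ) ^ ((n : ℝ) / 2) * Real.exp (-(x ^ 2 / 4)) := by
  rcases Nat.eq_zero_or_pos n with hn | hn
  · subst hn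
    simp only [iteratedDeriv_zero, pow_zero, Nat.cast_zero, zero_div, Real.rpow_zero, one_mul]
    rw [show |gaussF x| = Real.exp (-(x ^ 2 / 2)) from abs_of_pos (gaussF_pos x)]
    exact Real.exp_le_exp.2 (by nlinarith [sq_nonneg x])
  · have hb := gaussF_bound1 n x
    have hnr : (0:ℝ) < (n : ℝ) := by exact_mod_cast hn
    -- x^2 + n ≤ 3n e^{x²/(2n)}
    have h1 : x ^ 2 + (n : ℝ) ≤ 3 * n * Real.exp (x ^ 2 / (2 * n)) := by
      have ht : x ^ 2 / (2 * n) ≤ Real.exp (x ^ 2 / (2 * n)) :=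
        le_trans (by linarith [Real.add_one_le_exp (x ^ 2 / (2*n))]) (le_refl _)
      have h2 : x ^ 2 ≤ 2 * n * Real.exp (x ^ 2 / (2 * n)) := by
        have := mul_le_mul_of_nonneg_left ht (by positivity : (0:ℝ) ≤ 2 * n)
        calc x ^ 2 = 2 * n * (x ^ 2 / (2 * n)) := by field_simp
        _ ≤ 2 * n * Real.exp (x ^ 2 / (2 * n)) := this
      have h3 : (n : ℝ) ≤ n * Real.exp (x ^ 2 / (2 * n)) := by
        nlinarith [Real.one_le_exp (by positivity : (0:ℝ) ≤ x ^ 2 / (2 * n))]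
      nlinarith
    have hexp : (Real.exp (x ^ 2 / (2 * n))) ^ ((n : ℝ) / 2) = Real.exp (x ^ 2 / 4) := by
      rw [← Real.exp_mul]
      congr 1
      field_simp
      ring
    have h4 : (x ^ 2 + (n : ℝ)) ^ ((n : ℝ) / 2)
        ≤ (3 * n) ^ ((n : ℝ) / 2) * Real.exp (x ^ 2 / 4) := by
      calc (x ^ 2 + (n : ℝ)) ^ ((n : ℝ) / 2)
          ≤ (3 * n * Real.exp (x ^ 2 / (2 * n))) ^ ((n : ℝ) / 2) :=
            Real.rpow_le_rpow (by positivity) h1 (by positivity)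
        _ = (3 * n) ^ ((n : ℝ) / 2) * Real.exp (x ^ 2 / 4) := by
            rw [Real.mul_rpow (by positivity) (Real.exp_pos _).le, hexp]
    have h5 : (3 * (n:ℝ)) ^ ((n : ℝ) / 2) ≤ 2 ^ (n:ℕ) * (n:ℝ) ^ ((n : ℝ) / 2) := by
      rw [Real.mul_rpow (by norm_num) hnr.le]
      have h6 : (3:ℝ) ^ ((n : ℝ) / 2) ≤ 4 ^ ((n : ℝ) / 2) :=
        Real.rpow_le_rpow (by norm_num) (by norm_num) (by positivity)
      have h7 : (4:ℝ) ^ ((n : ℝ) / 2) = 2 ^ (n:ℕ) := by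
        rw [← Real.rpow_natCast 2 n, show ((n:ℕ):ℝ) = 2 * ((n:ℝ)/2) by ring,
          Real.rpow_mul (by norm_num : (0:ℝ) ≤ 2)]
        norm_num
      exact mul_le_mul_of_nonneg_right (h6.trans_eq h7) (Real.rpow_nonneg hnr.le _)
    -- combine
    have hgF : gaussF x = Real.exp (-(x ^ 2 / 4)) * Real.exp (-(x ^ 2 / 4)) := by
      rw [gaussF, ← Real.exp_add]; ring_nf
    have hcomb : 2 ^ n * (x ^ 2 + (n:ℝ)) ^ ((n : ℝ) / 2) * gaussF x
        ≤ 4 ^ n * (n : ℝ) ^ ((n : ℝ) / 2) * Real.exp (-(x ^ 2 / 4)) := by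
      have e1 : Real.exp (x ^ 2 / 4) * gaussF x = Real.exp (-(x^2/4)) := by
        rw [gaussF, ← Real.exp_add]; ring_nf
      calc 2 ^ n * (x ^ 2 + (n:ℝ)) ^ ((n : ℝ) / 2) * gaussF x
          ≤ 2 ^ n * ((3 * n) ^ ((n : ℝ) / 2) * Real.exp (x ^ 2 / 4)) * gaussF x := by
            apply mul_le_mul_of_nonneg_right _ (gaussF_pos x).le
            exact mul_le_mul_of_nonneg_left h4 (by positivity)
        _ = 2 ^ n * (3 * (n:ℝ)) ^ ((n : ℝ) / 2) * (Real.exp (x ^ 2 / 4) * gaussF x) := by ring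
        _ ≤ 2 ^ n * (2 ^ (n:ℕ) * (n:ℝ) ^ ((n : ℝ) / 2)) * (Real.exp (x ^ 2 / 4) * gaussF x) := by
            rw [e1]
            apply mul_le_mul_of_nonneg_right _ (Real.exp_pos _).le
            exact mul_le_mul_of_nonneg_left h5 (by positivity)
        _ = (2 ^ n * 2 ^ n) * (n:ℝ) ^ ((n : ℝ) / 2) * (Real.exp (x ^ 2 / 4) * gaussF x) := by ring
        _ = 4 ^ n * (n : ℝ) ^ ((n : ℝ) / 2) * Real.exp (-(x ^ 2 / 4)) := by
            rw [e1, ← pow_add, show n + n = 2 * n from by ring, pow_mul]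
            norm_num
    exact hb.trans hcomb

lemma pderiv_eval (G : ℝ → ℝ) (hG : Differentiable ℝ G) :
    pderivOp (0 : Fin 1) (fun x => G (x 0)) = fun x => deriv G (x 0) := by
  funext x
  have hL : (fun x : Fin 1 → ℝ => G (x 0))
      = G ∘ (ContinuousLinearMap.proj (R := ℝ) (φ := fun _ : Fin 1 => ℝ) 0) := rfl
  rw [pderivOp, hL, fderiv_comp x (hG _) (ContinuousLinearMap.differentiableAt _)]
  simp [ContinuousLinearMap.fderiv, fderiv_apply_one_eq_deriv]

lemma iterate_pderiv_eval (G : ℝ → ℝ) (hG : ContDiff ℝ (⊤ : ℕ∞) G) (n : ℕ) :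
    (pderivOp (0 : Fin 1))^[n] (fun x => G (x 0)) = fun x => iteratedDeriv n G (x 0) := by
  induction n with
  | zero => simp
  | succ n ih =>
      rw [Function.iterate_succ_apply', ih,
        pderiv_eval (iteratedDeriv n G)
          (hG.differentiable_iteratedDeriv n (by exact_mod_cast ENat.coe_lt_top n))]
      funext x
      rw [← iteratedDeriv_succ]

lemma mderiv_eval (G : ℝ → ℝ) (hG : ContDiff ℝ (⊤ : ℕ∞) G) (β : Fin 1 → ℕ) :
    mderiv β (fun x => G (x 0)) = fun x => iteratedDeriv (β 0) G (x 0) := by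
  have h1 : List.finRange 1 = [(0 : Fin 1)] := by decide
  rw [mderiv, h1]
  simp only [List.foldr_cons, List.foldr_nil]
  exact iterate_pderiv_eval G hG (β 0)

lemma mpow_eval (x : Fin 1 → ℝ) (α : Fin 1 → ℕ) : mpow x α = x 0 ^ α 0 := by
  simp [mpow]

lemma msize_eval (α : Fin 1 → ℕ) : msize α = α 0 := by simp [msize]

lemma iteratedDeriv_shift (G : ℝ → ℝ) (hG : ContDiff ℝ (⊤ : ℕ∞) G) (a : ℝ) (n : ℕ) :
    ∀ y, iteratedDeriv n (fun t => G (t - a)) y = iteratedDeriv n G (y - a) := by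
  induction n with
  | zero => intro y; simp
  | succ n ih =>
      intro y
      rw [iteratedDeriv_succ, funext ih, deriv_comp_sub_const, ← iteratedDeriv_succ]


section SeqLemmas
variable (M : ℕ → ℝ)

noncomputable def muSeq (M : ℕ → ℝ) (p : ℕ) : ℝ := M (p + 1) / M p

variable (hpos : ∀ p, 0 < M p) (hlc : ∀ p : ℕ, M (p + 1) ^ 2 ≤ M p * M (p + 2))
include hpos

lemma muSeq_pos (p : ℕ) : 0 < muSeq M p := div_pos (hpos _) (hpos _)

lemma M_succ_eq (p : ℕ) : M (p + 1) = M p * muSeq M p := by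
  rw [muSeq]
  field_simp [(hpos p).ne']

include hlc

lemma muSeq_mono : Monotone (muSeq M) := by
  apply monotone_nat_of_le_succ
  intro p
  rw [muSeq, muSeq, div_le_div_iff₀ (hpos _) (hpos _)]
  nlinarith [hlc p, hpos p, hpos (p+1), hpos (p+2)]

lemma seq_C2 (q : ℕ) : ∀ p, q ≤ p → M p ≤ M q * muSeq M p ^ (p - q) := by
  intro p hp
  induction p, hp using Nat.le_induction with
  | base => simp
  | succ p hqp ih =>
      have h1 : p + 1 - q = (p - q) + 1 := by omega
      rw [h1, M_succ_eq M hpos p]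
      calc M p * muSeq M p
          ≤ (M q * muSeq M p ^ (p - q)) * muSeq M p :=
            mul_le_mul_of_nonneg_right ih (muSeq_pos M hpos p).le
        _ = M q * muSeq M p ^ (p - q + 1) := by ring
        _ ≤ M q * muSeq M (p + 1) ^ (p - q + 1) := by
            apply mul_le_mul_of_nonneg_left _ (hpos q).le
            exact pow_le_pow_left₀ (muSeq_pos M hpos p).le
              (muSeq_mono M hpos hlc (Nat.le_succ p)) _

lemma seq_C1 (p : ℕ) : ∀ q, p ≤ q → M p * muSeq M p ^ (q - p) ≤ M q := by
  intro q hq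
  induction q, hq using Nat.le_induction with
  | base => simp
  | succ q hpq ih =>
      have h1 : q + 1 - p = (q - p) + 1 := by omega
      rw [h1, M_succ_eq M hpos q, pow_succ, ← mul_assoc]
      exact mul_le_mul ih (muSeq_mono M hpos hlc hpq)
        (muSeq_pos M hpos p).le (hpos q).le

lemma seq_key (p q : ℕ) : M p * muSeq M p ^ q ≤ M q * muSeq M p ^ p := by
  rcases le_total p q with h | h
  · have h1 := seq_C1 M hpos hlc p q h
    calc M p * muSeq M p ^ q = (M p * muSeq M p ^ (q - p)) * muSeq M p ^ p := by
          rw [mul_assoc, ← pow_add]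
          congr 2
          omega
      _ ≤ M q * muSeq M p ^ p :=
          mul_le_mul_of_nonneg_right h1 (pow_nonneg (muSeq_pos M hpos p).le _)
  · have h1 := seq_C2 M hpos hlc q p h
    calc M p * muSeq M p ^ q ≤ (M q * muSeq M p ^ (p - q)) * muSeq M p ^ q :=
          mul_le_mul_of_nonneg_right h1 (pow_nonneg (muSeq_pos M hpos p).le _)
      _ = M q * muSeq M p ^ p := by
          rw [mul_assoc, ← pow_add]
          congr 2
          omega

lemma seq_mu_pow_ge (hnorm : M 0 = 1) (p : ℕ) : M p ≤ muSeq M p ^ p := by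
  have := seq_C2 M hpos hlc 0 p (Nat.zero_le p)
  simpa [hnorm] using this

end SeqLemmas

lemma pow_le_rpow_half (s : ℝ) (hs : 0 ≤ s) (m : ℕ) :
    s ^ m ≤ (m : ℝ) ^ ((m : ℝ) / 2) * Real.exp (s ^ 2 / 2) := by
  rcases Nat.eq_zero_or_pos m with hm | hm
  · subst hm
    simp [Real.one_le_exp (by positivity : (0:ℝ) ≤ s ^ 2 / 2)]
  · have hmr : (0:ℝ) < m := by exact_mod_cast hm
    have h1 : s ^ 2 ≤ (m : ℝ) * Real.exp (s ^ 2 / m) := by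
      have ht : s ^ 2 / m ≤ Real.exp (s ^ 2 / m) := by
        linarith [Real.add_one_le_exp (s ^ 2 / (m:ℝ))]
      calc s ^ 2 = (m : ℝ) * (s ^ 2 / m) := by field_simp
        _ ≤ (m : ℝ) * Real.exp (s ^ 2 / m) := mul_le_mul_of_nonneg_left ht hmr.le
    have h2 : (s ^ 2 : ℝ) ^ ((m : ℝ) / 2) ≤ ((m : ℝ) * Real.exp (s ^ 2 / m)) ^ ((m : ℝ) / 2) :=
      Real.rpow_le_rpow (by positivity) h1 (by positivity)
    have h3 : (s ^ 2 : ℝ) ^ ((m : ℝ) / 2) = s ^ m := by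
      rw [← Real.rpow_natCast s 2, ← Real.rpow_mul hs, ← Real.rpow_natCast s m]
      congr 1
      push_cast
      ring
    have h4 : ((m : ℝ) * Real.exp (s ^ 2 / m)) ^ ((m : ℝ) / 2)
        = (m : ℝ) ^ ((m : ℝ) / 2) * Real.exp (s ^ 2 / 2) := by
      rw [Real.mul_rpow hmr.le (Real.exp_pos _).le, ← Real.exp_mul]
      congr 2
      field_simp
    rw [← h3, ← h4] at *
    exact h2

lemma pow_le_exp_mul (r δ : ℝ) (hr : 0 ≤ r) (hδ : 0 < δ) (m : ℕ) :
    r ^ m ≤ Real.exp ((r / δ) ^ 2 / 2) * δ ^ m * (m : ℝ) ^ ((m : ℝ) / 2) := by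
  have h := pow_le_rpow_half (r / δ) (by positivity) m
  have h2 := mul_le_mul_of_nonneg_right h (pow_nonneg hδ.le m : (0:ℝ) ≤ δ ^ m)
  calc r ^ m = (r / δ) ^ m * δ ^ m := by rw [div_pow]; field_simp
    _ ≤ (m : ℝ) ^ ((m : ℝ) / 2) * Real.exp ((r / δ) ^ 2 / 2) * δ ^ m := h2
    _ = Real.exp ((r / δ) ^ 2 / 2) * δ ^ m * (m : ℝ) ^ ((m : ℝ) / 2) := by ring


noncomputable def testFun (a : ℝ) : (Fin 1 → ℝ) → ℝ := fun x => gaussF (x 0 - a)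

lemma testFunG_contDiff (a : ℝ) : ContDiff ℝ (⊤ : ℕ∞) (fun t : ℝ => gaussF (t - a)) :=
  gaussF_contDiff.comp (contDiff_id.sub contDiff_const)

lemma testFun_contDiff (a : ℝ) : ContDiff ℝ (⊤ : ℕ∞) (testFun a) := by
  have h : ContDiff ℝ (⊤ : ℕ∞) (fun x : Fin 1 → ℝ => x 0) :=
    (ContinuousLinearMap.proj (R := ℝ) (φ := fun _ : Fin 1 => ℝ) 0).contDiff
  exact gaussF_contDiff.comp ((h.sub contDiff_const : ContDiff ℝ (⊤ : ℕ∞) (fun x : Fin 1 → ℝ => x 0 - a)))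

lemma add_pow_le_two_pow (u v : ℝ) (hu : 0 ≤ u) (hv : 0 ≤ v) (m : ℕ) :
    (u + v) ^ m ≤ 2 ^ m * (u ^ m + v ^ m) := by
  rcases le_total u v with h | h
  · calc (u + v) ^ m ≤ (2 * v) ^ m := pow_le_pow_left₀ (by linarith) (by linarith) m
      _ = 2 ^ m * v ^ m := mul_pow 2 v m
      _ ≤ 2 ^ m * (u ^ m + v ^ m) := by
          have := pow_nonneg hu m
          have h2 : (0:ℝ) ≤ (2:ℝ) ^ m := by positivity
          nlinarith
  · calc (u + v) ^ m ≤ (2 * u) ^ m := pow_le_pow_left₀ (by linarith) (by linarith) m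
      _ = 2 ^ m * u ^ m := mul_pow 2 u m
      _ ≤ 2 ^ m * (u ^ m + v ^ m) := by
          have := pow_nonneg hv m
          have h2 : (0:ℝ) ≤ (2:ℝ) ^ m := by positivity
          nlinarith

/-- Central pointwise estimate for the translated Gaussian test function. -/
lemma testFun_pointwise (a : ℝ) (ha : 0 ≤ a) (α β : Fin 1 → ℕ) (x : Fin 1 → ℝ) :
    |mpow x α * mderiv β (testFun a) x|
      ≤ 4 ^ (α 0) * 4 ^ (β 0) * (α 0 : ℝ) ^ ((α 0 : ℝ) / 2) * (β 0 : ℝ) ^ ((β 0 : ℝ) / 2)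
        + 2 ^ (α 0) * 4 ^ (β 0) * a ^ (α 0) * (β 0 : ℝ) ^ ((β 0 : ℝ) / 2) := by
  set m := α 0
  set n := β 0
  set y := x 0
  set z := y - a with hz
  have hmd : mderiv β (testFun a) x = iteratedDeriv n gaussF z := by
    have he : testFun a = fun x : Fin 1 → ℝ => (fun t => gaussF (t - a)) (x 0) := rfl
    rw [he, mderiv_eval _ (testFunG_contDiff a) β]
    exact iteratedDeriv_shift gaussF gaussF_contDiff a n y
  have hmp : |mpow x α| = |y| ^ m := by rw [mpow_eval, abs_pow]
  have hder : |iteratedDeriv n gaussF z|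
      ≤ 4 ^ n * (n : ℝ) ^ ((n : ℝ) / 2) * Real.exp (-(z ^ 2 / 4)) := gaussF_bound n z
  have hy : |y| ^ m ≤ 2 ^ m * (|z| ^ m + a ^ m) := by
    have h1 : |y| ≤ |z| + a := by
      rw [hz]
      calc |y| = |(y - a) + a| := by ring_nf
        _ ≤ |y - a| + |a| := abs_add_le _ _
        _ = |y - a| + a := by rw [abs_of_nonneg ha]
    calc |y| ^ m ≤ (|z| + a) ^ m := pow_le_pow_left₀ (abs_nonneg y) h1 m
      _ ≤ 2 ^ m * (|z| ^ m + a ^ m) := add_pow_le_two_pow _ _ (abs_nonneg z) ha m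
  have hzm : |z| ^ m * Real.exp (-(z ^ 2 / 4)) ≤ 2 ^ m * (m : ℝ) ^ ((m : ℝ) / 2) := by
    have h2 := pow_le_exp_mul |z| 2 (abs_nonneg z) (by norm_num) m
    -- |z|^m ≤ exp((|z|/2)^2/2) * 2^m * m^{m/2}
    have h3 : Real.exp ((|z| / 2) ^ 2 / 2) * Real.exp (-(z ^ 2 / 4)) ≤ 1 := by
      rw [← Real.exp_add]
      apply Real.exp_le_one_iff.2
      have : (|z| / 2) ^ 2 = z ^ 2 / 4 := by
        rw [div_pow, sq_abs]; norm_num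
      rw [this]
      nlinarith [sq_nonneg z]
    have hE := (Real.exp_pos (-(z ^ 2 / 4))).le
    calc |z| ^ m * Real.exp (-(z ^ 2 / 4))
        ≤ (Real.exp ((|z| / 2) ^ 2 / 2) * 2 ^ m * (m : ℝ) ^ ((m : ℝ) / 2))
          * Real.exp (-(z ^ 2 / 4)) := mul_le_mul_of_nonneg_right h2 hE
      _ = (Real.exp ((|z| / 2) ^ 2 / 2) * Real.exp (-(z ^ 2 / 4)))
          * (2 ^ m * (m : ℝ) ^ ((m : ℝ) / 2)) := by ring
      _ ≤ 1 * (2 ^ m * (m : ℝ) ^ ((m : ℝ) / 2)) := by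
          apply mul_le_mul_of_nonneg_right h3
          positivity
      _ = 2 ^ m * (m : ℝ) ^ ((m : ℝ) / 2) := one_mul _
  have hexp1 : Real.exp (-(z ^ 2 / 4)) ≤ 1 := Real.exp_le_one_iff.2 (by nlinarith [sq_nonneg z])
  rw [abs_mul, hmp, hmd]
  have hd0 : 0 ≤ |iteratedDeriv n gaussF z| := abs_nonneg _
  calc |y| ^ m * |iteratedDeriv n gaussF z|
      ≤ (2 ^ m * (|z| ^ m + a ^ m)) * (4 ^ n * (n : ℝ) ^ ((n : ℝ) / 2) * Real.exp (-(z ^ 2 / 4))) := by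
        apply mul_le_mul hy hder hd0
        positivity
    _ = 2 ^ m * 4 ^ n * (n : ℝ) ^ ((n : ℝ) / 2) * (|z| ^ m * Real.exp (-(z ^ 2 / 4)))
        + 2 ^ m * 4 ^ n * (n : ℝ) ^ ((n : ℝ) / 2) * (a ^ m * Real.exp (-(z ^ 2 / 4))) := by ring
    _ ≤ 2 ^ m * 4 ^ n * (n : ℝ) ^ ((n : ℝ) / 2) * (2 ^ m * (m : ℝ) ^ ((m : ℝ) / 2))
        + 2 ^ m * 4 ^ n * (n : ℝ) ^ ((n : ℝ) / 2) * (a ^ m * 1) := by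
        apply add_le_add
        · apply mul_le_mul_of_nonneg_left hzm
          positivity
        · apply mul_le_mul_of_nonneg_left _ (by positivity)
          exact mul_le_mul_of_nonneg_left hexp1 (pow_nonneg ha m)
    _ = 4 ^ m * 4 ^ n * (m : ℝ) ^ ((m : ℝ) / 2) * (n : ℝ) ^ ((n : ℝ) / 2)
        + 2 ^ m * 4 ^ n * a ^ m * (n : ℝ) ^ ((n : ℝ) / 2) := by
        have e1 : (4:ℝ) ^ m = 2 ^ m * 2 ^ m := by rw [← mul_pow]; norm_num
        rw [e1]; ring

/-- Master seminorm estimate for the translated Gaussian. -/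
lemma master_estimate (M : ℕ → ℝ) (hMpos : ∀ p, 0 < M p) (hM0 : M 0 = 1)
    (H₁ : ℝ) (hH₁ : 1 ≤ H₁)
    (h12 : ∀ C > (0:ℝ), ∃ B > (0:ℝ), ∀ p q : ℕ,
      (p : ℝ) ^ ((p : ℝ) / 2) * M q ≤ B * C ^ p * H₁ ^ (p + q) * M (p + q))
    (h : ℝ) (hh : 0 < h) :
    ∃ B₀ > (0:ℝ), ∀ a δ D₁ : ℝ, 0 ≤ a → 0 < δ → 1 ≤ D₁ → 2 * δ * H₁ ≤ h →
      (∀ m : ℕ, a ^ m ≤ D₁ * δ ^ m * M m) →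
      seqBound M h (B₀ * D₁) (testFun a) := by
  have hH₁0 : (0:ℝ) < H₁ := lt_of_lt_of_le one_pos hH₁
  set c : ℝ := h / (8 * H₁ ^ 2) with hc
  set c₂ : ℝ := h / (4 * H₁) with hc₂
  obtain ⟨B₁, hB₁, h1⟩ := h12 c (by positivity)
  obtain ⟨B₂, hB₂, h2⟩ := h12 c₂ (by positivity)
  refine ⟨B₁ * B₁ + B₂, by positivity, ?_⟩
  intro a δ D₁ ha hδ hD₁ hδh hD
  intro α β x
  rw [msize_eval, msize_eval]
  set m := α 0 with hm
  set n := β 0 with hn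
  have hm2 : (0:ℝ) ≤ (m : ℝ) ^ ((m : ℝ) / 2) := Real.rpow_nonneg (Nat.cast_nonneg m) _
  have hn2 : (0:ℝ) ≤ (n : ℝ) ^ ((n : ℝ) / 2) := Real.rpow_nonneg (Nat.cast_nonneg n) _
  have hMk := hMpos (m + n)
  -- Term A
  have e1 : (n : ℝ) ^ ((n : ℝ) / 2) ≤ B₁ * c ^ n * H₁ ^ n * M n := by
    have := h1 n 0
    simpa [hM0] using this
  have e2 : (m : ℝ) ^ ((m : ℝ) / 2) * M n ≤ B₁ * c ^ m * H₁ ^ (m + n) * M (m + n) := h1 m n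
  have keyA : (m : ℝ) ^ ((m : ℝ) / 2) * (n : ℝ) ^ ((n : ℝ) / 2)
      ≤ B₁ * B₁ * c ^ (m + n) * H₁ ^ (n + (m + n)) * M (m + n) := by
    calc (m : ℝ) ^ ((m : ℝ) / 2) * (n : ℝ) ^ ((n : ℝ) / 2)
        ≤ (m : ℝ) ^ ((m : ℝ) / 2) * (B₁ * c ^ n * H₁ ^ n * M n) :=
          mul_le_mul_of_nonneg_left e1 hm2
      _ = (B₁ * c ^ n * H₁ ^ n) * ((m : ℝ) ^ ((m : ℝ) / 2) * M n) := by ring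
      _ ≤ (B₁ * c ^ n * H₁ ^ n) * (B₁ * c ^ m * H₁ ^ (m + n) * M (m + n)) :=
          mul_le_mul_of_nonneg_left e2 (by positivity)
      _ = B₁ * B₁ * (c ^ n * c ^ m) * (H₁ ^ n * H₁ ^ (m + n)) * M (m + n) := by ring
      _ = B₁ * B₁ * c ^ (m + n) * H₁ ^ (n + (m + n)) * M (m + n) := by
          rw [← pow_add, ← pow_add, Nat.add_comm n m]
  have hA : (4:ℝ) ^ m * 4 ^ n * (m : ℝ) ^ ((m : ℝ) / 2) * (n : ℝ) ^ ((n : ℝ) / 2)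
      ≤ B₁ * B₁ * h ^ (m + n) * M (m + n) := by
    have hq : (4:ℝ) ^ m * 4 ^ n = 4 ^ (m + n) := (pow_add 4 m n).symm
    have hH : H₁ ^ (n + (m + n)) ≤ H₁ ^ (2 * (m + n)) :=
      pow_le_pow_right₀ hH₁ (by omega)
    calc (4:ℝ) ^ m * 4 ^ n * (m : ℝ) ^ ((m : ℝ) / 2) * (n : ℝ) ^ ((n : ℝ) / 2)
        = 4 ^ (m + n) * ((m : ℝ) ^ ((m : ℝ) / 2) * (n : ℝ) ^ ((n : ℝ) / 2)) := by
          rw [← hq]; ring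
      _ ≤ 4 ^ (m + n) * (B₁ * B₁ * c ^ (m + n) * H₁ ^ (n + (m + n)) * M (m + n)) :=
          mul_le_mul_of_nonneg_left keyA (by positivity)
      _ ≤ 4 ^ (m + n) * (B₁ * B₁ * c ^ (m + n) * H₁ ^ (2 * (m + n)) * M (m + n)) := by
          apply mul_le_mul_of_nonneg_left _ (by positivity : (0:ℝ) ≤ 4 ^ (m + n))
          apply mul_le_mul_of_nonneg_right _ hMk.le
          exact mul_le_mul_of_nonneg_left hH (by positivity)
      _ = B₁ * B₁ * (4 * (c * H₁ ^ 2)) ^ (m + n) * M (m + n) := by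
          rw [pow_mul, mul_pow 4 (c * H₁ ^ 2), mul_pow c (H₁ ^ 2)]
          ring
      _ = B₁ * B₁ * (h / 2) ^ (m + n) * M (m + n) := by
          have hce : 4 * (c * H₁ ^ 2) = h / 2 := by
            rw [hc]; field_simp; ring
          rw [hce]
      _ ≤ B₁ * B₁ * h ^ (m + n) * M (m + n) := by
          apply mul_le_mul_of_nonneg_right _ hMk.le
          apply mul_le_mul_of_nonneg_left _ (by positivity)
          exact pow_le_pow_left₀ (by positivity) (by linarith) _
  -- Term B
  have e3 : (n : ℝ) ^ ((n : ℝ) / 2) * M m ≤ B₂ * c₂ ^ n * H₁ ^ (n + m) * M (n + m) := h2 n m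
  have hB : (2:ℝ) ^ m * 4 ^ n * a ^ m * (n : ℝ) ^ ((n : ℝ) / 2)
      ≤ B₂ * D₁ * h ^ (m + n) * M (m + n) := by
    calc (2:ℝ) ^ m * 4 ^ n * a ^ m * (n : ℝ) ^ ((n : ℝ) / 2)
        ≤ (2:ℝ) ^ m * 4 ^ n * (D₁ * δ ^ m * M m) * (n : ℝ) ^ ((n : ℝ) / 2) := by
          apply mul_le_mul_of_nonneg_right _ hn2
          exact mul_le_mul_of_nonneg_left (hD m) (by positivity)
      _ = D₁ * (2 * δ) ^ m * 4 ^ n * ((n : ℝ) ^ ((n : ℝ) / 2) * M m) := by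
          rw [mul_pow 2 δ]; ring
      _ ≤ D₁ * (2 * δ) ^ m * 4 ^ n * (B₂ * c₂ ^ n * H₁ ^ (n + m) * M (n + m)) := by
          apply mul_le_mul_of_nonneg_left e3 (by positivity)
      _ = B₂ * D₁ * ((2 * δ) ^ m * H₁ ^ m) * ((4 * c₂) ^ n * H₁ ^ n) * M (n + m) := by
          rw [pow_add H₁ n m, mul_pow 4 c₂]
          ring
      _ = B₂ * D₁ * (2 * δ * H₁) ^ m * (4 * c₂ * H₁) ^ n * M (m + n) := by
          rw [← mul_pow, ← mul_pow, Nat.add_comm n m]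
      _ ≤ B₂ * D₁ * h ^ m * h ^ n * M (m + n) := by
          have hc2h : 4 * c₂ * H₁ = h := by
            rw [hc₂]; field_simp
          rw [hc2h]
          apply mul_le_mul_of_nonneg_right _ hMk.le
          apply mul_le_mul_of_nonneg_right _ (by positivity)
          apply mul_le_mul_of_nonneg_left _ (by positivity)
          exact pow_le_pow_left₀ (by positivity) hδh _
      _ = B₂ * D₁ * h ^ (m + n) * M (m + n) := by rw [mul_assoc (B₂ * D₁), ← pow_add]
  -- combine
  have hpt := testFun_pointwise a ha α β x
  rw [← hm, ← hn] at hpt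
  calc |mpow x α * mderiv β (testFun a) x|
      ≤ 4 ^ m * 4 ^ n * (m : ℝ) ^ ((m : ℝ) / 2) * (n : ℝ) ^ ((n : ℝ) / 2)
        + 2 ^ m * 4 ^ n * a ^ m * (n : ℝ) ^ ((n : ℝ) / 2) := hpt
    _ ≤ B₁ * B₁ * h ^ (m + n) * M (m + n) + B₂ * D₁ * h ^ (m + n) * M (m + n) := add_le_add hA hB
    _ ≤ (B₁ * B₁ + B₂) * D₁ * h ^ (m + n) * M (m + n) := by
        have hhM : (0:ℝ) ≤ h ^ (m + n) * M (m + n) := by positivity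
        have : B₁ * B₁ * h ^ (m + n) * M (m + n) ≤ B₁ * B₁ * D₁ * h ^ (m + n) * M (m + n) := by
          have := mul_le_mul_of_nonneg_left hD₁ (by positivity : (0:ℝ) ≤ B₁ * B₁)
          nlinarith
        nlinarith

/-- Membership of translated Gaussians in the Beurling class. -/
lemma testFun_mem (M : ℕ → ℝ) (hMpos : ∀ p, 0 < M p) (hM0 : M 0 = 1)
    (H₁ : ℝ) (hH₁ : 1 ≤ H₁)
    (h12 : ∀ C > (0:ℝ), ∃ B > (0:ℝ), ∀ p q : ℕ,
      (p : ℝ) ^ ((p : ℝ) / 2) * M q ≤ B * C ^ p * H₁ ^ (p + q) * M (p + q))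
    (a : ℝ) (ha : 0 ≤ a) : testFun a ∈ SBeurlingSeq M 1 := by
  have hH₁0 : (0:ℝ) < H₁ := lt_of_lt_of_le one_pos hH₁
  refine ⟨testFun_contDiff a, ?_⟩
  intro h hh
  obtain ⟨B₃, hB₃, h3⟩ := h12 1 one_pos
  set δ : ℝ := h / (2 * H₁) with hδdef
  have hδ : 0 < δ := by positivity
  set δ' : ℝ := δ / H₁ with hδ'def
  have hδ' : 0 < δ' := by positivity
  set D₁ : ℝ := max 1 (Real.exp ((a / δ') ^ 2 / 2) * B₃) with hD₁def
  have hD₁1 : 1 ≤ D₁ := le_max_left _ _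
  have hD : ∀ m : ℕ, a ^ m ≤ D₁ * δ ^ m * M m := by
    intro m
    have e1 := pow_le_exp_mul a δ' ha hδ' m
    have e2 : (m : ℝ) ^ ((m : ℝ) / 2) ≤ B₃ * H₁ ^ m * M m := by
      have := h3 m 0
      simpa [hM0] using this
    have e3 : δ' ^ m * H₁ ^ m = δ ^ m := by
      rw [← mul_pow, hδ'def, div_mul_cancel₀ _ (ne_of_gt hH₁0)]
    calc a ^ m ≤ Real.exp ((a / δ') ^ 2 / 2) * δ' ^ m * (m : ℝ) ^ ((m : ℝ) / 2) := e1
      _ ≤ Real.exp ((a / δ') ^ 2 / 2) * δ' ^ m * (B₃ * H₁ ^ m * M m) := by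
          apply mul_le_mul_of_nonneg_left e2 (by positivity)
      _ = (Real.exp ((a / δ') ^ 2 / 2) * B₃) * (δ' ^ m * H₁ ^ m) * M m := by ring
      _ = (Real.exp ((a / δ') ^ 2 / 2) * B₃) * δ ^ m * M m := by rw [e3]
      _ ≤ D₁ * δ ^ m * M m := by
          apply mul_le_mul_of_nonneg_right _ (hMpos m).le
          apply mul_le_mul_of_nonneg_right _ (by positivity)
          exact le_max_right _ _
  obtain ⟨B₀, hB₀, hmas⟩ := master_estimate M hMpos hM0 H₁ hH₁ h12 h hh
  have hδh : 2 * δ * H₁ ≤ h := by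
    rw [hδdef]
    rw [show 2 * (h / (2 * H₁)) * H₁ = h * ((2 * H₁) / (2 * H₁)) by ring,
      div_self (by positivity : (2:ℝ) * H₁ ≠ 0), mul_one]
  exact ⟨B₀ * D₁, by positivity, hmas a δ D₁ ha hδ hD₁1 hδh hD⟩

/-- The converse direction: continuity of the inclusion in dimension one implies `M ⪯ N`. -/
lemma converse_direction (M N : ℕ → ℝ) (hMpos : ∀ p, 0 < M p) (hNpos : ∀ p, 0 < N p)
    (hM : IsLC M) (hN : IsLC N) (h12M : cond12L2Bseq M)
    (hinc : contIncBSeq M N 1) : seqPreceq M N := by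
  obtain ⟨H, hH, h12M'⟩ := h12M
  set H₁ : ℝ := max H 1 with hH₁def
  have hH₁ : 1 ≤ H₁ := le_max_right _ _
  have h12 : ∀ C > (0:ℝ), ∃ B > (0:ℝ), ∀ p q : ℕ,
      (p : ℝ) ^ ((p : ℝ) / 2) * M q ≤ B * C ^ p * H₁ ^ (p + q) * M (p + q) := by
    intro C hC
    obtain ⟨B, hB, hBpq⟩ := h12M' C hC
    refine ⟨B, hB, fun p q => (hBpq p q).trans ?_⟩
    have h1 : H ^ (p + q) ≤ H₁ ^ (p + q) := pow_le_pow_left₀ hH.le (le_max_left _ _) _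
    have h2 : (0:ℝ) ≤ B * C ^ p := by positivity
    have h3 := mul_le_mul_of_nonneg_right
      (mul_le_mul_of_nonneg_left h1 h2) (hMpos (p + q)).le
    simpa [mul_assoc] using h3
  obtain ⟨h', hh', C, hC1, hP⟩ := hinc 1 one_pos
  obtain ⟨B₀, hB₀, hmas⟩ := master_estimate M hMpos hM.norm0 H₁ hH₁ h12 h' hh'
  have hC0 : (0:ℝ) < C := lt_of_lt_of_le one_pos hC1
  set ε : ℝ := h' / (2 * H₁) with hεdef
  have hε : 0 < ε := by positivity
  have hMle : ∀ p : ℕ, M p ≤ C * B₀ * (1 / ε) ^ p * N p := by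
    intro p
    set μ : ℝ := muSeq M p with hμdef
    have hμ0 : 0 < μ := muSeq_pos M hMpos p
    set a : ℝ := ε * μ with hadef
    have ha : 0 ≤ a := by positivity
    set D₁ : ℝ := μ ^ p / M p with hD₁def
    have hD₁1 : 1 ≤ D₁ :=
      (one_le_div (hMpos p)).2 (seq_mu_pow_ge M hMpos hM.logConvex hM.norm0 p)
    have hD₁0 : 0 < D₁ := lt_of_lt_of_le one_pos hD₁1
    have hD : ∀ m : ℕ, a ^ m ≤ D₁ * ε ^ m * M m := by
      intro m
      have hk := seq_key M hMpos hM.logConvex p m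
      -- M p * μ ^ m ≤ M m * μ ^ p
      have h4 : μ ^ m ≤ D₁ * M m := by
        rw [hD₁def, div_mul_eq_mul_div, le_div_iff₀ (hMpos p)]
        nlinarith [hk]
      calc a ^ m = ε ^ m * μ ^ m := mul_pow ε μ m
        _ ≤ ε ^ m * (D₁ * M m) := mul_le_mul_of_nonneg_left h4 (by positivity)
        _ = D₁ * ε ^ m * M m := by ring
    have hδh : 2 * ε * H₁ ≤ h' := by
      rw [hεdef]
      rw [show 2 * (h' / (2 * H₁)) * H₁ = h' * ((2 * H₁) / (2 * H₁)) by ring,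
        div_self (by positivity : (2:ℝ) * H₁ ≠ 0), mul_one]
    have hsb : seqBound M h' (B₀ * D₁) (testFun a) := hmas a ε D₁ ha hε hD₁1 hδh hD
    have hmem : testFun a ∈ SBeurlingSeq M 1 :=
      testFun_mem M hMpos hM.norm0 H₁ hH₁ h12 a ha
    have hres := hP (testFun a) hmem (B₀ * D₁) (by positivity) hsb
    have heval := hres (fun _ => p) (fun _ => 0) (fun _ => a)
    rw [msize_eval, msize_eval] at heval
    have hmp : mpow (fun _ : Fin 1 => a) (fun _ : Fin 1 => p) = a ^ p := mpow_eval _ _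
    have hmd : mderiv (fun _ : Fin 1 => (0:ℕ)) (testFun a) (fun _ : Fin 1 => a) = 1 := by
      have he : testFun a = fun x : Fin 1 → ℝ => (fun t => gaussF (t - a)) (x 0) := rfl
      rw [he, mderiv_eval _ (testFunG_contDiff a)]
      simp [gaussF]
    rw [hmp, hmd, mul_one] at heval
    have h6 : a ^ p ≤ C * (B₀ * D₁) * N p := by
      have h7 := heval
      rw [abs_of_nonneg (pow_nonneg ha p)] at h7
      simpa using h7
    have h8 : a ^ p = ε ^ p * (D₁ * M p) := by
      rw [hadef, mul_pow, hD₁def, div_mul_cancel₀ _ (ne_of_gt (hMpos p))]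
    rw [h8] at h6
    have h9 : ε ^ p * M p ≤ C * B₀ * N p := by
      have h10 : ε ^ p * (D₁ * M p) = D₁ * (ε ^ p * M p) := by ring
      have h11 : C * (B₀ * D₁) * N p = D₁ * (C * B₀ * N p) := by ring
      rw [h10, h11] at h6
      exact le_of_mul_le_mul_left h6 hD₁0
    calc M p = (1 / ε) ^ p * (ε ^ p * M p) := by
          rw [one_div, inv_pow, ← mul_assoc, inv_mul_cancel₀ (by positivity : ε ^ p ≠ 0), one_mul]
      _ ≤ (1 / ε) ^ p * (C * B₀ * N p) := by
          apply mul_le_mul_of_nonneg_left h9 (by positivity)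
      _ = C * B₀ * (1 / ε) ^ p * N p := by ring
  -- assemble seqPreceq
  refine ⟨max (C * B₀) 1 * max (1 / ε) 1, ?_, ?_⟩
  · have h1 : (1:ℝ) ≤ max (C * B₀) 1 := le_max_right _ _
    have h2 : (1:ℝ) ≤ max (1 / ε) 1 := le_max_right _ _
    nlinarith
  · intro p
    rcases Nat.eq_zero_or_pos p with hp | hp
    · subst hp
      simp [hM.norm0, hN.norm0]
    · have h1 : (1:ℝ) ≤ max (C * B₀) 1 := le_max_right _ _
      have h2 : (1:ℝ) ≤ max (1 / ε) 1 := le_max_right _ _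
      calc M p ≤ C * B₀ * (1 / ε) ^ p * N p := hMle p
        _ ≤ max (C * B₀) 1 * (max (1 / ε) 1) ^ p * N p := by
            apply mul_le_mul_of_nonneg_right _ (hNpos p).le
            apply mul_le_mul (le_max_left _ _)
              (pow_le_pow_left₀ (by positivity) (le_max_left _ _) _) (by positivity)
              (by linarith)
        _ ≤ (max (C * B₀) 1) ^ p * (max (1 / ε) 1) ^ p * N p := by
            apply mul_le_mul_of_nonneg_right _ (hNpos p).le
            apply mul_le_mul_of_nonneg_right _ (by positivity)
            exact le_self_pow₀ (by linarith) (by omega)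
        _ = (max (C * B₀) 1 * max (1 / ε) 1) ^ p * N p := by rw [mul_pow]

/-- Theorem `Gelfandweightsequence` (III): for `M, N ∈ LC` satisfying (M2')
and (12L2B), `M ⪯ N` iff `S_(M)(ℝ^d) ⊆ S_(N)(ℝ^d)` with continuous inclusion for all `d`;
the forward implication holds for arbitrary positive sequences and the converse needs
only `d = 1`. -/
theorem beurling_inclusion_characterization_weight_sequences (M N : ℕ → ℝ)
    (hMpos : ∀ p, 0 < M p) (hNpos : ∀ p, 0 < N p) :
    (seqPreceq M N →
      ∀ d : ℕ, 0 < d → SBeurlingSeq M d ⊆ SBeurlingSeq N d ∧ contIncBSeq M N d) ∧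
    (IsLC M → IsLC N → condM2' M → condM2' N → cond12L2Bseq M → cond12L2Bseq N →
      ((seqPreceq M N ↔
          ∀ d : ℕ, 0 < d → SBeurlingSeq M d ⊆ SBeurlingSeq N d ∧ contIncBSeq M N d) ∧
        ((SBeurlingSeq M 1 ⊆ SBeurlingSeq N 1 ∧ contIncBSeq M N 1) → seqPreceq M N))) := by
  have fwd : seqPreceq M N →
      ∀ d : ℕ, 0 < d → SBeurlingSeq M d ⊆ SBeurlingSeq N d ∧ contIncBSeq M N d := by
    rintro ⟨C, hC1, hCp⟩ d hd
    have hC0 : (0:ℝ) < C := lt_of_lt_of_le one_pos hC1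
    have key : ∀ h : ℝ, 0 < h → ∀ D : ℝ, 0 ≤ D → ∀ f : (Fin d → ℝ) → ℝ,
        seqBound M (h / C) D f → seqBound N h D f := by
      intro h hh D hD f hb α β x
      set k := msize α + msize β with hk
      calc |mpow x α * mderiv β f x| ≤ D * (h / C) ^ k * M k := hb α β x
        _ ≤ D * (h / C) ^ k * (C ^ k * N k) := by
            apply mul_le_mul_of_nonneg_left (hCp k) (by positivity)
        _ = D * ((h / C) ^ k * C ^ k) * N k := by ring
        _ = D * h ^ k * N k := by
            rw [← mul_pow, div_mul_cancel₀ _ (ne_of_gt hC0)]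
    constructor
    · rintro f ⟨hsm, hb⟩
      refine ⟨hsm, fun h hh => ?_⟩
      obtain ⟨D, hD, hDb⟩ := hb (h / C) (by positivity)
      exact ⟨D, hD, key h hh D hD.le f hDb⟩
    · intro h hh
      refine ⟨h / C, by positivity, 1, le_refl 1, fun f _ D hD hb => ?_⟩
      rw [one_mul]
      exact key h hh D hD f hb
  refine ⟨fwd, ?_⟩
  intro hM hN _ _ h12M _
  have conv : (SBeurlingSeq M 1 ⊆ SBeurlingSeq N 1 ∧ contIncBSeq M N 1) → seqPreceq M N :=
    fun h => converse_direction M N hMpos hNpos hM hN h12M h.2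
  exact ⟨⟨fun hpre => fwd hpre, fun hall => conv (hall 1 one_pos)⟩, conv⟩
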